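/- Let B be a category with finite limits and T = (T, e, m) a cartesian monad on B. If f : x ⟶ y is a morphism of B such that T(f) is an effective descent morphism, then f and T(T(f)) are effective descent morphisms. -/

import Mathlib

/-!
The square for the unit and the one for the multiplication exhibit `f` and `T (T f)` as pullbacks
of `T f`, so it suffices that effective descent morphisms are stable under pullback. Given a
pullback square `k ≫ g = f ≫ u`, the Beck–Chevalley isomorphism `f^* ⋙ k_! ≅ u_! ⋙ g^*` transfers
Beck's monadicity criterion from `g^*` to `f^*`: `u_!` sends `f^*`-split pairs to `g^*`-split
ones, and since `u_!` and `k_!` are forgetful functors of slices up to equivalence, `u_!` creates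
and `k_!` reflects their coequalizers.
-/

open CategoryTheory CategoryTheory.Limits

/-- A morphism `p` in a category with pullbacks is an effective descent morphism if the
Eilenberg–Moore comparison functor of the adjunction `p_! ⊣ p^*` is an equivalence. -/
def IsEffectiveDescentMorphism {B : Type*} [Category B] [HasPullbacks B]
    {x y : B} (p : x ⟶ y) : Prop :=
  (Monad.comparison (Over.mapPullbackAdj p)).IsEquivalence

universe v₁ v₂

namespace CategoryTheory

section SplitPairs

variable {C D : Type*} [Category C] [Category D]

def IsSplitCoequalizer.ofIsoParallelPair {X Y X' Y' Z : C} {f g : X ⟶ Y} {f' g' : X' ⟶ Y'}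
    {π : Y ⟶ Z} (eX : X ≅ X') (eY : Y ≅ Y')
    (hf : f ≫ eY.hom = eX.hom ≫ f') (hg : g ≫ eY.hom = eX.hom ≫ g')
    (q : IsSplitCoequalizer f g π) : IsSplitCoequalizer f' g' (eY.inv ≫ π) where
  rightSection := q.rightSection ≫ eY.hom
  leftSection := eY.inv ≫ q.leftSection ≫ eX.hom
  condition := by
    rw [← cancel_epi eX.hom, ← reassoc_of% hf, ← reassoc_of% hg]
    simp [q.condition]
  rightSection_π := by simp
  leftSection_bottom := by simp [← hg]
  leftSection_top := by simp [← hf]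

lemma Functor.IsSplitPair.of_iso {F F' : C ⥤ D} (e : F ≅ F') {A B : C} {φ ψ : A ⟶ B}
    [F.IsSplitPair φ ψ] : F'.IsSplitPair φ ψ :=
  ⟨⟨_, _, ⟨(HasSplitCoequalizer.isSplitCoequalizer (F.map φ) (F.map ψ)).ofIsoParallelPair
    (e.app A) (e.app B) (e.hom.naturality φ) (e.hom.naturality ψ)⟩⟩⟩

end SplitPairs

section Monadic

variable {C D : Type*} [Category.{v₁} C] [Category.{v₁} D]

lemma Monad.hasCoequalizer_of_isSplitPair (G : D ⥤ C) [MonadicRightAdjoint G] {A B : D}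
    (f g : A ⟶ B) [G.IsSplitPair f g] : HasCoequalizer f g :=
  have := Monad.createsGSplitCoequalizersOfMonadic G f g
  have : HasColimit (parallelPair f g ⋙ G) :=
    hasColimit_of_iso (F := parallelPair (G.map f) (G.map g)) (diagramIsoParallelPair _)
  hasColimit_of_created _ G

lemma Monad.preservesColimit_of_isSplitPair (G : D ⥤ C) [MonadicRightAdjoint G] {A B : D}
    (f g : A ⟶ B) [G.IsSplitPair f g] : PreservesColimit (parallelPair f g) G :=
  have := Monad.createsGSplitCoequalizersOfMonadic G f g
  have : HasColimit (parallelPair f g ⋙ G) :=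
    hasColimit_of_iso (F := parallelPair (G.map f) (G.map g)) (diagramIsoParallelPair _)
  inferInstance

lemma MonadicRightAdjoint.reflectsIsomorphisms (G : D ⥤ C) [MonadicRightAdjoint G] :
    G.ReflectsIsomorphisms :=
  reflectsIsomorphisms_of_iso (Monad.comparisonForget (monadicAdjunction G))

end Monadic

section MonadicitySquare

variable {D C D' C' : Type*} [Category.{v₁} D] [Category.{v₁} C] [Category.{v₂} D']
  [Category.{v₂} C']
  {G : D ⥤ C} {H : D ⥤ D'} {K : C ⥤ C'} {G' : D' ⥤ C'}

lemma Functor.IsSplitPair.map_of_iso_comp (e : G ⋙ K ≅ H ⋙ G') {A B : D} (φ ψ : A ⟶ B)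
    [G.IsSplitPair φ ψ] : G'.IsSplitPair (H.map φ) (H.map ψ) :=
  have : (G ⋙ K).IsSplitPair φ ψ := inferInstanceAs (HasSplitCoequalizer (K.map _) (K.map _))
  Functor.IsSplitPair.of_iso e

lemma Functor.reflectsIsomorphisms_of_iso_comp (e : G ⋙ K ≅ H ⋙ G') [H.ReflectsIsomorphisms]
    [G'.ReflectsIsomorphisms] : G.ReflectsIsomorphisms :=
  have : (G ⋙ K).ReflectsIsomorphisms := reflectsIsomorphisms_of_iso e.symm
  reflectsIsomorphisms_of_comp G K

lemma Monad.hasCoequalizerOfIsSplitPair_of_iso_comp (e : G ⋙ K ≅ H ⋙ G')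
    [CreatesColimitsOfShape WalkingParallelPair H] [MonadicRightAdjoint G'] :
    Monad.HasCoequalizerOfIsSplitPair G where
  out φ ψ _ :=
    have := Functor.IsSplitPair.map_of_iso_comp e φ ψ
    have := Monad.hasCoequalizer_of_isSplitPair G' (H.map φ) (H.map ψ)
    have : HasColimit (parallelPair φ ψ ⋙ H) :=
      hasColimit_of_iso (F := parallelPair (H.map φ) (H.map ψ)) (diagramIsoParallelPair _)
    hasColimit_of_created _ H

lemma Monad.preservesColimitOfIsSplitPair_of_iso_comp (e : G ⋙ K ≅ H ⋙ G')
    [CreatesColimitsOfShape WalkingParallelPair H] [ReflectsColimitsOfShape WalkingParallelPair K]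
    [MonadicRightAdjoint G'] : Monad.PreservesColimitOfIsSplitPair G where
  out φ ψ _ :=
    have := Functor.IsSplitPair.map_of_iso_comp e φ ψ
    have := Monad.hasCoequalizer_of_isSplitPair G' (H.map φ) (H.map ψ)
    have := Monad.preservesColimit_of_isSplitPair G' (H.map φ) (H.map ψ)
    have : HasColimit (parallelPair φ ψ ⋙ H) :=
      hasColimit_of_iso (F := parallelPair (H.map φ) (H.map ψ)) (diagramIsoParallelPair _)
    have : PreservesColimit (parallelPair φ ψ ⋙ H) G' :=
      preservesColimit_of_iso_diagram (K₁ := parallelPair (H.map φ) (H.map ψ)) G'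
        (diagramIsoParallelPair (parallelPair φ ψ ⋙ H)).symm
    have : PreservesColimit (parallelPair φ ψ) (G ⋙ K) := preservesColimit_of_natIso _ e.symm
    preservesColimit_of_reflects_of_preserves _ K

theorem Monad.comparison_isEquivalence_of_iso_comp {F : C ⥤ D} (adj : F ⊣ G)
    (e : G ⋙ K ≅ H ⋙ G') [H.ReflectsIsomorphisms] [CreatesColimitsOfShape WalkingParallelPair H]
    [ReflectsColimitsOfShape WalkingParallelPair K] [MonadicRightAdjoint G'] :
    (Monad.comparison adj).IsEquivalence := by
  have := MonadicRightAdjoint.reflectsIsomorphisms G'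
  have := Functor.reflectsIsomorphisms_of_iso_comp e
  have := Monad.hasCoequalizerOfIsSplitPair_of_iso_comp e
  have := Monad.preservesColimitOfIsSplitPair_of_iso_comp e
  exact (Monad.monadicOfHasPreservesGSplitCoequalizersOfReflectsIsomorphisms adj).eqv

end MonadicitySquare

section Slices

variable {C : Type*} [Category C]

-- `Over.map u` is the forgetful functor `Over (Over.mk u) ⥤ Over y` up to the iterated slice
-- equivalence `Over x ≌ Over (Over.mk u)`.
noncomputable instance Over.createsColimitsOfSizeMap {x y : C} (u : x ⟶ y) :
    CreatesColimitsOfSize.{w, w'} (Over.map u) :=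
  inferInstanceAs (CreatesColimitsOfSize
    ((Over.iteratedSliceEquiv (Over.mk u)).inverse ⋙ Over.forget (Over.mk u)))

instance Over.reflectsIsomorphisms_map {x y : C} (u : x ⟶ y) :
    (Over.map u).ReflectsIsomorphisms :=
  inferInstanceAs (Functor.ReflectsIsomorphisms
    ((Over.iteratedSliceEquiv (Over.mk u)).inverse ⋙ Over.forget (Over.mk u)))

variable [HasPullbacks C]

noncomputable def Over.pullbackCompMapIsoOfIsPullback {x y a b : C} {k : x ⟶ a} {f : x ⟶ y}
    {g : a ⟶ b} {u : y ⟶ b} (h : IsPullback k f g u) :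
    Over.pullback f ⋙ Over.map k ≅ Over.map u ⋙ Over.pullback g :=
  NatIso.ofComponents
    (fun d => Over.isoMk ((IsPullback.of_hasPullback d.hom f).paste_vert h.flip).isoPullback)
    (fun {d d'} φ => by
      ext; dsimp; ext
      · simp [pullback.lift_fst (f := d'.hom ≫ u) (g := g),
          pullback.lift_fst (f := d'.hom) (g := f)]
      · simp [pullback.lift_snd (f := d'.hom ≫ u) (g := g),
          pullback.lift_snd_assoc (f := d'.hom) (g := f)])

end Slices

end CategoryTheory

theorem IsEffectiveDescentMorphism.of_isPullback {C : Type*} [Category C] [HasPullbacks C]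
    {x y a b : C} {k : x ⟶ a} {f : x ⟶ y} {g : a ⟶ b} {u : y ⟶ b} (h : IsPullback k f g u)
    (hg : IsEffectiveDescentMorphism g) : IsEffectiveDescentMorphism f :=
  have : MonadicRightAdjoint (Over.pullback g) := ⟨_, Over.mapPullbackAdj g, hg⟩
  Monad.comparison_isEquivalence_of_iso_comp (Over.mapPullbackAdj f)
    (Over.pullbackCompMapIsoOfIsPullback h)

theorem cartesianMonad_effectiveDescent_general
    {B : Type*} [Category B] [HasFiniteLimits B] (T : Monad B)
    (he : ∀ {a b : B} (f : a ⟶ b), IsPullback f (T.η.app a) (T.η.app b) (T.map f))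
    (hm : ∀ {a b : B} (f : a ⟶ b),
      IsPullback (T.map (T.map f)) (T.μ.app a) (T.μ.app b) (T.map f))
    {x y : B} (f : x ⟶ y) (hf : IsEffectiveDescentMorphism (T.map f)) :
    IsEffectiveDescentMorphism f ∧ IsEffectiveDescentMorphism (T.map (T.map f)) :=
  ⟨.of_isPullback (he f).flip hf, .of_isPullback (hm f).flip hf⟩

/-- Let `T` be a cartesian monad (a pullback-preserving monad whose unit and multiplication
naturality squares are pullbacks) on a category with finite limits.  If `T f` is an
effective descent morphism, then so are `f` and `T (T f)`. -/
theorem cartesianMonad_effectiveDescent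
    {B : Type*} [Category B] [HasFiniteLimits B] (T : Monad B)
    [PreservesLimitsOfShape WalkingCospan T.toFunctor]
    (he : ∀ {a b : B} (f : a ⟶ b), IsPullback f (T.η.app a) (T.η.app b) (T.map f))
    (hm : ∀ {a b : B} (f : a ⟶ b),
      IsPullback (T.map (T.map f)) (T.μ.app a) (T.μ.app b) (T.map f))
    {x y : B} (f : x ⟶ y) (hf : IsEffectiveDescentMorphism (T.map f)) :
    IsEffectiveDescentMorphism f ∧ IsEffectiveDescentMorphism (T.map (T.map f)) :=
  cartesianMonad_effectiveDescent_general T he hm f hf
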